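/- arXiv:2309.11634 — 5 statements merged into one kernel-verified Lean document; each statement's English description precedes it below -/
import Mathlib

section
/- For any sets A and B and any natural number n > 0, if there is a bijection between A × Fin n and B × Fin n, then there is a bijection between A and B (this can be shown without the axiom of choice, but any proof in Lean is acceptable). -/
theorem shoe_division (n : ℕ) (hn : 0 < n) (A B : Type)
    (h : Nonempty (A × Fin n ≃ B × Fin n)) : Nonempty (A ≃ B) := by
  rw [← Cardinal.eq] at h ⊢
  simp only [Cardinal.mk_prod, Cardinal.mk_fin, Cardinal.lift_natCast,
    Cardinal.lift_id] at h
  have hn' : (n : Cardinal) ≠ 0 := by exact_mod_cast hn.ne'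
  by_cases hA : Cardinal.aleph0 ≤ Cardinal.mk A
  · have h1 : Cardinal.mk A * n = Cardinal.mk A :=
      Cardinal.mul_eq_left hA (le_trans (Cardinal.nat_lt_aleph0 n).le hA)
        hn'
    have hB : Cardinal.aleph0 ≤ Cardinal.mk B := by
      by_contra hB
      push_neg at hB
      have : Cardinal.mk B * n < Cardinal.aleph0 :=
        Cardinal.mul_lt_aleph0 hB (Cardinal.nat_lt_aleph0 n)
      rw [← h, h1] at this
      exact absurd hA (not_le_of_gt this)
    have h2 : Cardinal.mk B * n = Cardinal.mk B :=
      Cardinal.mul_eq_left hB (le_trans (Cardinal.nat_lt_aleph0 n).le hB) hn'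
    rw [h1, h2] at h
    exact h
  · push_neg at hA
    have hB : Cardinal.mk B < Cardinal.aleph0 := by
      by_contra hB
      push_neg at hB
      have h2 : Cardinal.mk B * n = Cardinal.mk B :=
        Cardinal.mul_eq_left hB (le_trans (Cardinal.nat_lt_aleph0 n).le hB) hn'
      have : Cardinal.mk A * n < Cardinal.aleph0 :=
        Cardinal.mul_lt_aleph0 hA (Cardinal.nat_lt_aleph0 n)
      rw [h, h2] at this
      exact absurd hB (not_le_of_gt this)
    obtain ⟨a, ha⟩ := Cardinal.lt_aleph0.mp hA
    obtain ⟨b, hb⟩ := Cardinal.lt_aleph0.mp hB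
    rw [ha, hb] at h ⊢
    norm_cast at h ⊢
    exact Nat.eq_of_mul_eq_mul_right hn h
end

section
/- Division by 2: for any sets A and B, if there is a bijection A × Fin 2 ≃ B × Fin 2, then there is a bijection A ≃ B. -/
theorem division_by_two (A B : Type)
    (h : Nonempty (A × Fin 2 ≃ B × Fin 2)) : Nonempty (A ≃ B) := by
  obtain ⟨e⟩ := h
  cases finite_or_infinite A with
  | inl hA =>
    have hB : Finite B := by
      have h1 : Finite (B × Fin 2) := Finite.of_equiv _ e
      exact Finite.of_injective (fun b : B => ((b, 0) : B × Fin 2))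
        (fun a b hab => congrArg Prod.fst hab)
    have := Fintype.ofFinite A
    have := Fintype.ofFinite B
    have hcard : Fintype.card A = Fintype.card B := by
      have h2 := Fintype.card_congr e
      simp [Fintype.card_prod] at h2
      omega
    exact ⟨Fintype.equivOfCardEq hcard⟩
  | inr hA =>
    have hB : Infinite B := by
      by_contra hfin
      rw [not_infinite_iff_finite] at hfin
      have : Finite (B × Fin 2) := inferInstance
      have : Finite (A × Fin 2) := Finite.of_equiv _ e.symm
      have : Finite A := Finite.of_injective (fun a : A => ((a, 0) : A × Fin 2))
        (fun a b hab => congrArg Prod.fst hab)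
      exact hA.not_finite this
    rw [← Cardinal.eq]
    have hc : Cardinal.mk A * 2 = Cardinal.mk B * 2 := by
      have := Cardinal.mk_congr e
      simpa [Cardinal.mk_fintype] using this
    have h2le : ∀ (C : Type) [Infinite C], (2 : Cardinal) ≤ Cardinal.mk C := by
      intro C _
      exact le_trans (by exact_mod_cast (Cardinal.nat_lt_aleph0 2).le) (Cardinal.aleph0_le_mk C)
    have hA2 : Cardinal.mk A * 2 = Cardinal.mk A := Cardinal.mul_eq_left (Cardinal.aleph0_le_mk A)
      (h2le A) two_ne_zero
    have hB2 : Cardinal.mk B * 2 = Cardinal.mk B := Cardinal.mul_eq_left (Cardinal.aleph0_le_mk B)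
      (h2le B) two_ne_zero
    rw [← hA2, ← hB2, hc]
end

section
/- Division by 3: for any sets A and B, if there is a bijection A × Fin 3 ≃ B × Fin 3, then there is a bijection A ≃ B. -/
theorem division_by_three (A B : Type)
    (h : Nonempty (A × Fin 3 ≃ B × Fin 3)) : Nonempty (A ≃ B) := by
  obtain ⟨e⟩ := h
  rw [← Cardinal.eq]
  have hm : Cardinal.mk A * 3 = Cardinal.mk B * 3 := by
    simpa [Cardinal.mk_fin] using Cardinal.mk_congr e
  have h3 : (3 : Cardinal) ≤ Cardinal.aleph0 := by
    exact_mod_cast (Cardinal.nat_lt_aleph0 3).le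
  rcases finite_or_infinite A with hA | hA
  · rcases finite_or_infinite B with hB | hB
    · have h1 : Nat.card A * 3 = Nat.card B * 3 := by
        simpa [Nat.card_prod] using Nat.card_congr e
      have h2 : Nat.card A = Nat.card B := by omega
      rw [Cardinal.eq]
      exact Finite.card_eq.mp h2
    · exfalso
      haveI : Finite (B × Fin 3) := Finite.of_equiv (A × Fin 3) e
      haveI : Finite B := Finite.prod_left (Fin 3)
      exact not_finite B
  · rcases finite_or_infinite B with hB | hB
    · exfalso
      haveI : Finite (A × Fin 3) := Finite.of_equiv (B × Fin 3) e.symm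
      haveI : Finite A := Finite.prod_left (Fin 3)
      exact not_finite A
    · have hA' : Cardinal.aleph0 ≤ Cardinal.mk A := Cardinal.infinite_iff.mp hA
      have hB' : Cardinal.aleph0 ≤ Cardinal.mk B := Cardinal.infinite_iff.mp hB
      rw [Cardinal.mul_eq_left hA' (h3.trans hA') (by norm_num),
          Cardinal.mul_eq_left hB' (h3.trans hB') (by norm_num)] at hm
      exact hm
end

section
/- Let n > 0. If multiplication by n equals repeated addition of n and shoe division by n holds, then sock division by n holds: for any families {X_a}_{a∈A} and {Y_b}_{b∈B} of pairwise disjoint n-element sets, a bijection ⋃_a X_a ≃ ⋃_b Y_b yields a bijection A ≃ B. -/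
/-- Multiplication by `n` equals repeated addition of `n`. -/
def MulEqRepeatedAdd (n : ℕ) : Prop :=
  ∀ (A U : Type) (X : A → Set U), Pairwise (Function.onFun Disjoint X) →
    (∀ a, Nonempty (X a ≃ Fin n)) → Nonempty ((⋃ a, X a) ≃ A × Fin n)

/-- Shoe division by `n`. -/
def ShoeDivision (n : ℕ) : Prop :=
  ∀ (A B : Type), Nonempty (A × Fin n ≃ B × Fin n) → Nonempty (A ≃ B)

theorem mul_eq_repeated_add_and_shoe_implies_sock_general (n : ℕ)
    (hmul : MulEqRepeatedAdd n) (hshoe : ShoeDivision n) :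
    ∀ (A B U V : Type) (X : A → Set U) (Y : B → Set V),
      Pairwise (Function.onFun Disjoint X) → Pairwise (Function.onFun Disjoint Y) →
      (∀ a, Nonempty (X a ≃ Fin n)) → (∀ b, Nonempty (Y b ≃ Fin n)) →
      Nonempty ((⋃ a, X a) ≃ (⋃ b, Y b)) → Nonempty (A ≃ B) := by
  intro A B U V X Y hX hY hXn hYn ⟨e⟩
  obtain ⟨eA⟩ := hmul A U X hX hXn
  obtain ⟨eB⟩ := hmul B V Y hY hYn
  exact hshoe A B ⟨(eA.symm.trans e).trans eB⟩

theorem mul_eq_repeated_add_and_shoe_implies_sock (n : ℕ) (hn : 0 < n)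
    (hmul : MulEqRepeatedAdd n) (hshoe : ShoeDivision n) :
    ∀ (A B U V : Type) (X : A → Set U) (Y : B → Set V),
      Pairwise (Function.onFun Disjoint X) → Pairwise (Function.onFun Disjoint Y) →
      (∀ a, Nonempty (X a ≃ Fin n)) → (∀ b, Nonempty (Y b ≃ Fin n)) →
      Nonempty ((⋃ a, X a) ≃ (⋃ b, Y b)) → Nonempty (A ≃ B) :=
  mul_eq_repeated_add_and_shoe_implies_sock_general n hmul hshoe
end

section
/- For any natural number n > 0, the principle of sock division by n is equivalent to the principle that multiplication by n equals repeated addition of n. -/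
/-!
For `MulEqRepeatedAdd`, apply sock division to two sock drawers with the same union
`(⋃ a, X a) × Fin n`: one whose socks are the rows `{x} × Fin n` for `x ∈ ⋃ a, X a`, the other
whose socks are the copies `X a × {i}` indexed by `A × Fin n`. Conversely, given
`⋃ a, X a ≃ ⋃ b, Y b`, repeated addition turns it into `A × Fin n ≃ B × Fin n`, and shoe division
(here: cancellation of `n ≠ 0` in cardinal arithmetic) gives `A ≃ B`.
-/

/-- Sock division by `n`. -/
def SockDivision (n : ℕ) : Prop :=
  ∀ (A B U V : Type) (X : A → Set U) (Y : B → Set V),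
    Pairwise (Function.onFun Disjoint X) → Pairwise (Function.onFun Disjoint Y) →
    (∀ a, Nonempty (X a ≃ Fin n)) → (∀ b, Nonempty (Y b ≃ Fin n)) →
    Nonempty ((⋃ a, X a) ≃ (⋃ b, Y b)) → Nonempty (A ≃ B)

universe u

open Set Function

section ProdSets

variable {ι α β : Type*}

lemma pairwise_disjoint_prod_singleton {s : ι → Set α} (hs : Pairwise (Disjoint on s)) :
    Pairwise (Disjoint on fun p : ι × β => s p.1 ×ˢ ({p.2} : Set β)) := by
  rintro ⟨i, b⟩ ⟨j, c⟩ hne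
  simp only [onFun, disjoint_prod, disjoint_singleton]
  by_cases hij : i = j
  · subst hij
    exact Or.inr fun hbc => hne (hbc ▸ rfl)
  · exact Or.inl (hs hij)

lemma pairwise_disjoint_singleton_prod (t : Set β) :
    Pairwise (Disjoint on fun a : α => ({a} : Set α) ×ˢ t) :=
  fun _ _ hne => disjoint_prod.mpr (Or.inl (disjoint_singleton.mpr hne))

lemma iUnion_prod_singleton (s : ι → Set α) :
    ⋃ p : ι × β, s p.1 ×ˢ ({p.2} : Set β) = (⋃ i, s i) ×ˢ univ := by
  rw [iUnion_prod, iUnion_singleton_eq_range, range_id']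

lemma iUnion_singleton_prod_univ : ⋃ a : α, ({a} : Set α) ×ˢ (univ : Set β) = univ := by
  rw [← iUnion_prod_const, iUnion_singleton_eq_range, range_id', univ_prod_univ]

def Equiv.Set.prodSingleton (s : Set α) (b : β) : ↥(s ×ˢ ({b} : Set β)) ≃ s :=
  (Equiv.Set.prod s {b}).trans <|
    ((Equiv.refl s).prodCongr (Equiv.Set.singleton b)).trans (Equiv.prodPUnit.{0} s)

def Equiv.Set.singletonProd (a : α) (t : Set β) : ↥(({a} : Set α) ×ˢ t) ≃ t :=
  (Equiv.Set.prod {a} t).trans <|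
    ((Equiv.Set.singleton a).prodCongr (Equiv.refl t)).trans (Equiv.punitProd.{0} t)

def Equiv.Set.prodUniv (s : Set α) : ↥(s ×ˢ (univ : Set β)) ≃ s × β :=
  (Equiv.Set.prod s univ).trans ((Equiv.refl s).prodCongr (Equiv.Set.univ β))

end ProdSets

theorem nonempty_equiv_of_prod_fin_equiv {A B : Type u} {n : ℕ} (hn : n ≠ 0)
    (e : A × Fin n ≃ B × Fin n) : Nonempty (A ≃ B) := by
  refine Cardinal.eq.mp ((Cardinal.mul_natCast_inj hn).mp ?_)
  simpa using Cardinal.mk_congr e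

theorem SockDivision.mulEqRepeatedAdd {n : ℕ} (h : SockDivision n) : MulEqRepeatedAdd n := by
  intro A U X hX hXn
  set T := ⋃ a, X a
  refine h T (A × Fin n) (T × Fin n) (U × Fin n) (fun x => {x} ×ˢ univ)
    (fun p => X p.1 ×ˢ {p.2}) (pairwise_disjoint_singleton_prod univ)
    (pairwise_disjoint_prod_singleton hX)
    (fun x => ⟨(Equiv.Set.singletonProd x univ).trans (Equiv.Set.univ _)⟩)
    (fun p => (hXn p.1).map (Equiv.Set.prodSingleton _ _).trans) ?_
  rw [iUnion_singleton_prod_univ, iUnion_prod_singleton]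
  exact ⟨(Equiv.Set.univ _).trans (Equiv.Set.prodUniv T).symm⟩

theorem MulEqRepeatedAdd.sockDivision {n : ℕ} (hn : n ≠ 0) (h : MulEqRepeatedAdd n) :
    SockDivision n := by
  intro A B U V X Y hX hY hXn hYn ⟨e⟩
  obtain ⟨eX⟩ := h A U X hX hXn
  obtain ⟨eY⟩ := h B V Y hY hYn
  exact nonempty_equiv_of_prod_fin_equiv hn ((eX.symm.trans e).trans eY)

theorem sockDivision_iff_mul_eq_repeated_add (n : ℕ) (hn : 0 < n) :
    SockDivision n ↔ MulEqRepeatedAdd n :=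
  ⟨SockDivision.mulEqRepeatedAdd, MulEqRepeatedAdd.sockDivision hn.ne'⟩
end
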